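/- Let H be a real Hilbert space and ℓ_1, …, ℓ_n continuous linearly independent linear functionals on H, with V₁ = ⋂_{j=1}^n ker ℓ_j, and let ψ_1, …, ψ_n ∈ V₁^⊥ satisfy ℓ_j(ψ_k) = δ_{jk}. Let g be a continuous linear functional on H, let u ∈ H be the unique element with ⟨u, v⟩ = g(v) for all v ∈ H, and let u_ms ∈ span{ψ_1, …, ψ_n} be the unique element with ⟨u_ms, ψ_k⟩ = g(ψ_k) for all k. Then ℓ_k(u_ms) = ℓ_k(u) for every k = 1, …, n; that is, the degrees of freedom of the coarse (Galerkin) solution coincide exactly with the constraint values (average pressures) of the exact fine-scale solution. -/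

import Mathlib

open scoped InnerProductSpace

/-!
The Galerkin error `w = u_ms - u` is orthogonal to every `ψ j`. Put `p = ∑ j, ℓ j w • ψ j`.
Biorthogonality gives `w - p ∈ V₁` and `ℓ k p = ℓ k w`, while `p ∈ V₁ᗮ`; hence
`⟪p, p⟫ = ⟪p, w⟫ - ⟪p, w - p⟫ = 0`, so `ℓ k w = ℓ k p = 0`.
-/

section Biorthogonal

variable {𝕜 E ι : Type*} [RCLike 𝕜] [NormedAddCommGroup E] [InnerProductSpace 𝕜 E]
  [Fintype ι] [DecidableEq ι] {ℓ : ι → E →ₗ[𝕜] 𝕜} {ψ : ι → E}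

theorem apply_sum_smul_of_biorthogonal (hδ : ∀ j k, ℓ j (ψ k) = if j = k then 1 else 0)
    (c : ι → 𝕜) (k : ι) : ℓ k (∑ j, c j • ψ j) = c k := by
  simp [hδ]

theorem sub_sum_smul_mem_iInf_ker (hδ : ∀ j k, ℓ j (ψ k) = if j = k then 1 else 0) (x : E) :
    x - ∑ j, ℓ j x • ψ j ∈ ⨅ j, LinearMap.ker (ℓ j) := by
  simp only [Submodule.mem_iInf, LinearMap.mem_ker, map_sub,
    apply_sum_smul_of_biorthogonal hδ, sub_self, implies_true]

theorem apply_eq_zero_of_inner_eq_zero_of_biorthogonal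
    (hψmem : ∀ k, ψ k ∈ (⨅ j, LinearMap.ker (ℓ j))ᗮ)
    (hδ : ∀ j k, ℓ j (ψ k) = if j = k then 1 else 0)
    {w : E} (hw : ∀ j, ⟪ψ j, w⟫_𝕜 = 0) (k : ι) : ℓ k w = 0 := by
  set p := ∑ j, ℓ j w • ψ j
  have hp_perp : p ∈ (⨅ j, LinearMap.ker (ℓ j))ᗮ :=
    Submodule.sum_mem _ fun j _ => Submodule.smul_mem _ _ (hψmem j)
  have hpw : ⟪p, w⟫_𝕜 = 0 := by
    simp [p, sum_inner, inner_smul_left, hw]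
  have hp : p = 0 := by
    have hpwp : ⟪p, w - p⟫_𝕜 = 0 :=
      Submodule.inner_left_of_mem_orthogonal (sub_sum_smul_mem_iInf_ker hδ w) hp_perp
    rw [inner_sub_right, hpw, zero_sub, neg_eq_zero] at hpwp
    exact inner_self_eq_zero.mp hpwp
  calc ℓ k w = ℓ k p := (apply_sum_smul_of_biorthogonal hδ (fun j => ℓ j w) k).symm
    _ = 0 := by rw [hp, map_zero]

end Biorthogonal

theorem coarse_dofs_equal_fine_averages_general
    {H : Type*} [NormedAddCommGroup H] [InnerProductSpace ℝ H]
    {n : ℕ} (ℓ : Fin n → H →L[ℝ] ℝ)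
    (V₁ : Submodule ℝ H) (hV₁ : V₁ = ⨅ j, LinearMap.ker (ℓ j : H →ₗ[ℝ] ℝ))
    (ψ : Fin n → H) (hψmem : ∀ k, ψ k ∈ V₁ᗮ)
    (hδ : ∀ j k, ℓ j (ψ k) = if j = k then 1 else 0)
    (g : H →L[ℝ] ℝ)
    (u : H) (hu : ∀ v : H, ⟪u, v⟫_ℝ = g v)
    (u_ms : H)
    (hms : ∀ k, ⟪u_ms, ψ k⟫_ℝ = g (ψ k)) :
    ∀ k, ℓ k u_ms = ℓ k u := by
  subst hV₁
  have galerkin_orthogonality : ∀ j, ⟪ψ j, u_ms - u⟫_ℝ = 0 := fun j => by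
    rw [real_inner_comm, inner_sub_left, hms, hu, sub_self]
  intro k
  have := apply_eq_zero_of_inner_eq_zero_of_biorthogonal hψmem hδ galerkin_orthogonality k
  rwa [ContinuousLinearMap.coe_coe, map_sub, sub_eq_zero] at this

/-- The degrees of freedom of the coarse Galerkin solution `u_ms` coincide with the
constraint values (average pressures) of the exact fine-scale solution `u`:
`ℓ k u_ms = ℓ k u` for all `k`. -/
theorem coarse_dofs_equal_fine_averages
    {H : Type*} [NormedAddCommGroup H] [InnerProductSpace ℝ H] [CompleteSpace H]
    {n : ℕ} (ℓ : Fin n → H →L[ℝ] ℝ) (hli : LinearIndependent ℝ ℓ)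
    (V₁ : Submodule ℝ H) (hV₁ : V₁ = ⨅ j, LinearMap.ker (ℓ j : H →ₗ[ℝ] ℝ))
    (ψ : Fin n → H) (hψmem : ∀ k, ψ k ∈ V₁ᗮ)
    (hδ : ∀ j k, ℓ j (ψ k) = if j = k then 1 else 0)
    (g : H →L[ℝ] ℝ)
    (u : H) (hu : ∀ v : H, ⟪u, v⟫_ℝ = g v)
    (u_ms : H) (hms_mem : u_ms ∈ Submodule.span ℝ (Set.range ψ))
    (hms : ∀ k, ⟪u_ms, ψ k⟫_ℝ = g (ψ k)) :
    ∀ k, ℓ k u_ms = ℓ k u :=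
  coarse_dofs_equal_fine_averages_general ℓ V₁ hV₁ ψ hψmem hδ g u hu u_ms hms
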